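/- In the emptying process of a duplicate-free list, every removal returns an element of the original list, each element is removed exactly once, and the state after k removals is the original list with the first k removed elements erased. -/

import Mathlib

/-- One removal step: erase `F s` from the state `s`. -/
def remStep {α : Type*} [DecidableEq α] (F : List α → Option α) (s : List α) : List α :=
  match F s with | none => s | some x => s.erase x

/-- The state of the emptying process after `k` removals, starting from `l`. -/
def stateAfter {α : Type*} [DecidableEq α] (F : List α → Option α) (l : List α) (k : ℕ) :
    List α :=
  (remStep F)^[k] l

/-- The sequence of items removed during the first `k` steps of the emptying process. -/
def removedList {α : Type*} [DecidableEq α] (F : List α → Option α) (l : List α) (k : ℕ) :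
    List α :=
  (List.range k).filterMap fun i => F (stateAfter F l i)

/-!
The identity `stateAfter = foldl erase` holds for any choice function, step by step. For the
rest, the invariant is that after `k ≤ l.length` steps exactly `k` elements have been removed and
`removed ++ state` is a permutation of `l`: the state is then duplicate-free and, for `k < l.length`,
nonempty, so `F` picks one of its elements and the invariant propagates.
-/

section EmptyingProcess

variable {α : Type*} [DecidableEq α] (F : List α → Option α) (l : List α)

lemma stateAfter_succ (k : ℕ) : stateAfter F l (k + 1) = remStep F (stateAfter F l k) :=
  Function.iterate_succ_apply' _ _ _

lemma removedList_succ (k : ℕ) :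
    removedList F l (k + 1) = removedList F l k ++ (F (stateAfter F l k)).toList := by
  rw [removedList, List.range_succ, List.filterMap_append, removedList]
  congr 1

lemma stateAfter_eq_foldl_erase (k : ℕ) :
    stateAfter F l k = (removedList F l k).foldl (fun s x => s.erase x) l := by
  induction k with
  | zero => rfl
  | succ k ih =>
    rw [stateAfter_succ, removedList_succ, List.foldl_append, ← ih, remStep]
    cases F (stateAfter F l k) <;> rfl

variable {F l}

lemma removedList_append_stateAfter_succ_perm {k : ℕ} {x : α} (hx : x ∈ stateAfter F l k)
    (hFx : F (stateAfter F l k) = some x) :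
    (removedList F l (k + 1) ++ stateAfter F l (k + 1)).Perm
      (removedList F l k ++ stateAfter F l k) := by
  rw [removedList_succ, stateAfter_succ, remStep, hFx, Option.toList_some, List.append_assoc]
  exact (List.perm_cons_erase hx).symm.append_left _

lemma exists_mem_stateAfter_of_perm
    (hmem : ∀ m : List α, m.Nodup → m ≠ [] → ∃ x ∈ m, F m = some x)
    (hnd : l.Nodup) {k : ℕ} (hk : k < l.length) (hlen : (removedList F l k).length = k)
    (hperm : (removedList F l k ++ stateAfter F l k).Perm l) :
    ∃ x ∈ stateAfter F l k, F (stateAfter F l k) = some x := by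
  have hnodup : (stateAfter F l k).Nodup := (hperm.nodup_iff.mpr hnd).of_append_right
  have hne : stateAfter F l k ≠ [] := by
    rintro hnil
    have := hperm.length_eq
    rw [hnil, List.append_nil, hlen] at this
    omega
  exact hmem _ hnodup hne

lemma removedList_length_and_perm
    (hmem : ∀ m : List α, m.Nodup → m ≠ [] → ∃ x ∈ m, F m = some x)
    (hnd : l.Nodup) {k : ℕ} (hk : k ≤ l.length) :
    (removedList F l k).length = k ∧ (removedList F l k ++ stateAfter F l k).Perm l := by
  induction k with
  | zero => exact ⟨rfl, List.Perm.refl l⟩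
  | succ k ih =>
    obtain ⟨hlen, hperm⟩ := ih (by omega)
    obtain ⟨x, hx, hFx⟩ := exists_mem_stateAfter_of_perm hmem hnd (by omega) hlen hperm
    refine ⟨?_, (removedList_append_stateAfter_succ_perm hx hFx).trans hperm⟩
    rw [removedList_succ, hFx, List.length_append, hlen, Option.toList_some, List.length_singleton]

end EmptyingProcess

theorem stmt17_general {α : Type*} [DecidableEq α] (F : List α → Option α)
    (hmem : ∀ m : List α, m.Nodup → m ≠ [] → ∃ x ∈ m, F m = some x)
    (l : List α) (hnd : l.Nodup) :
    (∀ k < l.length, ∃ x ∈ l, F (stateAfter F l k) = some x) ∧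
    (removedList F l l.length).Nodup ∧
    (∀ x ∈ l, x ∈ removedList F l l.length) ∧
    (∀ k ≤ l.length,
      stateAfter F l k = (removedList F l k).foldl (fun s x => s.erase x) l) := by
  have hremoved : (removedList F l l.length).Perm l := by
    obtain ⟨hlen, hperm⟩ := removedList_length_and_perm hmem hnd le_rfl
    have hnil : stateAfter F l l.length = [] := by
      have := hperm.length_eq
      rw [List.length_append, hlen] at this
      exact List.length_eq_zero_iff.mp (by omega)
    rwa [hnil, List.append_nil] at hperm
  refine ⟨fun k hk => ?_, hremoved.nodup_iff.mpr hnd, fun x hx => hremoved.mem_iff.mpr hx,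
    fun k _ => stateAfter_eq_foldl_erase F l k⟩
  obtain ⟨hlen, hperm⟩ := removedList_length_and_perm hmem hnd hk.le
  obtain ⟨x, hx, hFx⟩ := exists_mem_stateAfter_of_perm hmem hnd hk hlen hperm
  exact ⟨x, hperm.subset (List.mem_append_right _ hx), hFx⟩

theorem stmt17 {α : Type*} [DecidableEq α] (F : List α → Option α)
    (hempty : F [] = none)
    (hmem : ∀ m : List α, m.Nodup → m ≠ [] → ∃ x ∈ m, F m = some x)
    (l : List α) (hnd : l.Nodup) :
    (∀ k < l.length, ∃ x ∈ l, F (stateAfter F l k) = some x) ∧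
    (removedList F l l.length).Nodup ∧
    (∀ x ∈ l, x ∈ removedList F l l.length) ∧
    (∀ k ≤ l.length,
      stateAfter F l k = (removedList F l k).foldl (fun s x => s.erase x) l) :=
  stmt17_general F hmem l hnd
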